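/- Let γ ∈ (0,1) and define, for a probability measure f on [-1,1], the quadratic tendency-to-compromise kernel Q[f] by (Q[f],φ) = ∬[φ(x + γ(x_* − x)) − φ(x)] df(x) df(x_*) for continuous φ. Then Q[f] has zero mass and zero mean, (Q[f],1) = 0 and (Q[f],x) = 0, and its second moment satisfies the exact identity (Q[f], x²) = −2γ(1−γ) Var[f]; in particular (Q[f],x²) ≤ −λ Var[f] with λ = 2γ(1−γ) > 0. -/

import Mathlib

/-!
Expanding `φ(x + γ(y - x))` for `φ = 1, x, x²` turns `Q[f,h]` into a polynomial in the first two
moments of `f` and `h`. On the diagonal `h = f` the mean cancels and the second moment collapses to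
`((1-γ)² - 1 + γ²) (f,x²) + 2γ(1-γ) (f,x)² = -2γ(1-γ) Var[f]`.
-/

open MeasureTheory Set

noncomputable section

/-- The tendency-to-compromise kernel, paired with a test function:
`(Q[f,h],φ) = ∬ [φ(x + γ(y - x)) - φ(x)] df(x) dh(y)`; the quadratic kernel is `Q[f] = Q[f,f]`. -/
def Qc (γ : ℝ) (f h : Measure ℝ) (φ : ℝ → ℝ) : ℝ :=
  ∫ x, ∫ y, (φ (x + γ * (y - x)) - φ x) ∂h ∂f

/-- Variance of a (probability) measure on `ℝ`. -/
def var (f : Measure ℝ) : ℝ := (∫ x, x ^ 2 ∂f) - (∫ x, x ∂f) ^ 2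

lemma integrable_of_continuous_of_measure_compl_Icc_eq_zero {f : Measure ℝ}
    [IsLocallyFiniteMeasure f] {a b : ℝ} (hsupp : f (Icc a b)ᶜ = 0) {g : ℝ → ℝ}
    (hg : Continuous g) : Integrable g f := by
  rw [← Measure.restrict_eq_self_of_ae_mem (ae_iff.mpr hsupp)]
  exact hg.integrableOn_Icc

section Moments

variable {h : Measure ℝ} [IsProbabilityMeasure h]

lemma integral_affine (hI1 : Integrable (fun y : ℝ => y) h) (a b : ℝ) :
    ∫ y, (a + b * y) ∂h = a + b * ∫ y, y ∂h := by
  rw [integral_add (integrable_const a) (hI1.const_mul b), integral_const, integral_const_mul]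
  simp

lemma integral_quadratic (hI1 : Integrable (fun y : ℝ => y) h)
    (hI2 : Integrable (fun y : ℝ => y ^ 2) h) (a b c : ℝ) :
    ∫ y, (a + b * y + c * y ^ 2) ∂h = a + b * ∫ y, y ∂h + c * ∫ y, y ^ 2 ∂h := by
  have hI_affine : Integrable (fun y : ℝ => a + b * y) h :=
    (integrable_const a).add (hI1.const_mul b)
  rw [integral_add hI_affine (hI2.const_mul c), integral_affine hI1, integral_const_mul]

end Moments

section Kernel

variable (γ : ℝ) (f h : Measure ℝ)

lemma Qc_const (c : ℝ) : Qc γ f h (fun _ => c) = 0 := by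
  simp [Qc]

variable [IsProbabilityMeasure f] [IsProbabilityMeasure h]

lemma Qc_id (hf1 : Integrable (fun x : ℝ => x) f) (hh1 : Integrable (fun y : ℝ => y) h) :
    Qc γ f h (fun x => x) = γ * ((∫ y, y ∂h) - ∫ x, x ∂f) := by
  have inner (x : ℝ) : ∫ y, (x + γ * (y - x) - x) ∂h = γ * ∫ y, y ∂h + -γ * x := by
    simp_rw [show ∀ y, x + γ * (y - x) - x = -γ * x + γ * y from fun y => by ring]
    rw [integral_affine hh1]
    ring
  rw [Qc, integral_congr_ae (.of_forall inner), integral_affine hf1]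
  ring

lemma Qc_sq (hf1 : Integrable (fun x : ℝ => x) f) (hf2 : Integrable (fun x : ℝ => x ^ 2) f)
    (hh1 : Integrable (fun y : ℝ => y) h) (hh2 : Integrable (fun y : ℝ => y ^ 2) h) :
    Qc γ f h (fun x => x ^ 2) =
      γ ^ 2 * (∫ y, y ^ 2 ∂h) + 2 * γ * (1 - γ) * (∫ x, x ∂f) * (∫ y, y ∂h)
        + ((1 - γ) ^ 2 - 1) * ∫ x, x ^ 2 ∂f := by
  have inner (x : ℝ) : ∫ y, ((x + γ * (y - x)) ^ 2 - x ^ 2) ∂h =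
      γ ^ 2 * (∫ y, y ^ 2 ∂h) + (2 * γ * (1 - γ) * ∫ y, y ∂h) * x
        + ((1 - γ) ^ 2 - 1) * x ^ 2 := by
    simp_rw [show ∀ y, (x + γ * (y - x)) ^ 2 - x ^ 2 =
        ((1 - γ) ^ 2 - 1) * x ^ 2 + 2 * γ * (1 - γ) * x * y + γ ^ 2 * y ^ 2 from
      fun y => by ring]
    rw [integral_quadratic hh1 hh2]
    ring
  rw [Qc, integral_congr_ae (.of_forall inner), integral_quadratic hf1 hf2]
  ring

end Kernel

/-- **Properties of the quadratic compromise kernel.** For `γ ∈ (0,1)` and any probability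
measure `f` on `[-1,1]`: `(Q[f],1) = 0`, `(Q[f],x) = 0`, `(Q[f],x²) = -2γ(1-γ)Var[f]`; in
particular `(Q[f],x²) ≤ -λ Var[f]` with `λ = 2γ(1-γ) > 0`. -/
theorem quadratic_compromise_kernel_properties (γ : ℝ) (hγ : γ ∈ Ioo (0 : ℝ) 1)
    (f : Measure ℝ) (hprob : IsProbabilityMeasure f)
    (hsupp : f (Icc (-1 : ℝ) 1)ᶜ = 0) :
    Qc γ f f (fun _ => 1) = 0 ∧
    Qc γ f f (fun x => x) = 0 ∧
    Qc γ f f (fun x => x ^ 2) = -(2 * γ * (1 - γ)) * var f ∧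
    Qc γ f f (fun x => x ^ 2) ≤ -(2 * γ * (1 - γ)) * var f ∧
    0 < 2 * γ * (1 - γ) := by
  have hI1 : Integrable (fun x : ℝ => x) f :=
    integrable_of_continuous_of_measure_compl_Icc_eq_zero hsupp continuous_id
  have hI2 : Integrable (fun x : ℝ => x ^ 2) f :=
    integrable_of_continuous_of_measure_compl_Icc_eq_zero hsupp (continuous_pow 2)
  have hsq : Qc γ f f (fun x => x ^ 2) = -(2 * γ * (1 - γ)) * var f := by
    rw [Qc_sq γ f f hI1 hI2 hI1 hI2, var]
    ring
  refine ⟨Qc_const γ f f 1, ?_, hsq, hsq.le, ?_⟩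
  · rw [Qc_id γ f f hI1 hI1, sub_self, mul_zero]
  · obtain ⟨hγ0, hγ1⟩ := hγ
    have : 0 < 1 - γ := sub_pos.mpr hγ1
    positivity
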